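/- For the type A(2k,2ℓ−1)^{(2)} data and for each i ∈ {1,2}: if u, v and u+v all lie in Ṙ₀(i)^× and ‖u‖ = ‖v‖ ≤ ‖u+v‖ (Euclidean norms), then S_{u+v}(i) ⊆ S_u(i) + S_v(i); that is, every m ∈ ℤ with u+v+mδ ∈ R₀(i)^× can be written m = m₁ + m₂ with u + m₁δ ∈ R₀(i)^× and v + m₂δ ∈ R₀(i)^×. (Property (2.8) of the paper for this type.) -/
import Mathlib


/-- The ambient real vector space with basis `δ, ε₁, …, ε_k, δ₁, …, δ_ℓ`. -/
abbrev Vkl (k l : ℕ) := ℝ × (Fin k → ℝ) × (Fin l → ℝ)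

/-- The basis vector `δ`. -/
def del {k l : ℕ} : Vkl k l := (1, 0, 0)

/-- The basis vector `ε_i`. -/
def eps {k l : ℕ} (i : Fin k) : Vkl k l := (0, Pi.single i 1, 0)

/-- The basis vector `δ_j`. -/
def dl {k l : ℕ} (j : Fin l) : Vkl k l := (0, 0, Pi.single j 1)

/-- The symmetric bilinear form with `B(δ,·) = 0`, `B(ε_i,ε_r) = δ_{ir}`,
`B(δ_j,δ_s) = -δ_{js}` and `B(ε_i,δ_j) = 0`. -/
def B {k l : ℕ} (v w : Vkl k l) : ℝ :=
  (∑ i, v.2.1 i * w.2.1 i) - (∑ j, v.2.2 j * w.2.2 j)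

/-- The set of signs `{1, -1}`. -/
def sgns : Set ℝ := {1, -1}

/-- The nonzero roots of the first affine component of the even part,
for type `A(2k,2ℓ-1)⁽²⁾`. -/
def R01x (k l : ℕ) : Set (Vkl k l) :=
  {v | ∃ (m : ℤ) (σ τ : ℝ) (j s : Fin l), σ ∈ sgns ∧ τ ∈ sgns ∧ j ≠ s ∧
    v = m • del + σ • dl j + τ • dl s} ∪
  {v | ∃ (m : ℤ) (σ : ℝ) (j : Fin l), σ ∈ sgns ∧
    v = (2 * m) • del + σ • ((2 : ℝ) • dl j)}

/-- The nonzero roots of the second affine component of the even part,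
for type `A(2k,2ℓ-1)⁽²⁾`. -/
def R02x (k l : ℕ) : Set (Vkl k l) :=
  {v | ∃ (m : ℤ) (σ : ℝ) (i : Fin k), σ ∈ sgns ∧ v = m • del + σ • eps i} ∪
  {v | ∃ (m : ℤ) (σ τ : ℝ) (i r : Fin k), σ ∈ sgns ∧ τ ∈ sgns ∧ i ≠ r ∧
    v = m • del + σ • eps i + τ • eps r} ∪
  {v | ∃ (m : ℤ) (σ : ℝ) (i : Fin k), σ ∈ sgns ∧
    v = (2 * m + 1) • del + σ • ((2 : ℝ) • eps i)}


/-- The Euclidean norm on `Vkl k l` for which `δ, ε₁, …, ε_k, δ₁, …, δ_ℓ` are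
orthonormal. -/
noncomputable def nrm {k l : ℕ} (v : Vkl k l) : ℝ :=
  Real.sqrt (v.1 ^ 2 + ∑ i, (v.2.1 i) ^ 2 + ∑ j, (v.2.2 j) ^ 2)

def sgl {n : ℕ} (a : Fin n) : Fin n → ℝ := Pi.single a 1

def Qv {k l : ℕ} (v : Vkl k l) : ℝ := (∑ i, (v.2.1 i)^2) + ∑ j, (v.2.2 j)^2

lemma sum_single_mul {n : ℕ} (a b : Fin n) :
    ∑ j, sgl a j * sgl b j = if a = b then 1 else 0 := by
  rcases eq_or_ne a b with rfl | h
  · simp [sgl, Pi.single_apply]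
  · simp only [if_neg h]
    apply Finset.sum_eq_zero
    intro j _
    rcases eq_or_ne j a with rfl | hj
    · simp [sgl, Pi.single_eq_of_ne h]
    · simp [sgl, Pi.single_eq_of_ne hj]

lemma sum_sq_comb {n : ℕ} (α β : ℝ) (a b : Fin n) :
    ∑ j, (α * sgl a j + β * sgl b j)^2
      = α^2 + β^2 + (if a = b then 2*α*β else 0) := by
  have hterm : ∀ j, (α * sgl a j + β * sgl b j)^2
      = α^2 * (sgl a j * sgl a j) + β^2 * (sgl b j * sgl b j)
        + (2*α*β) * (sgl a j * sgl b j) := by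
    intro j; ring
  simp_rw [hterm, Finset.sum_add_distrib, ← Finset.mul_sum, sum_single_mul]
  rcases eq_or_ne a b with rfl | h
  · simp
  · simp [h]

lemma Q_dl2 {k l : ℕ} (α β : ℝ) (a b : Fin l) :
    Qv (α • dl a + β • dl b : Vkl k l) = α^2 + β^2 + (if a = b then 2*α*β else 0) := by
  have hdl : ∀ c : Fin l, (dl c : Vkl k l) = (0, 0, sgl c) := fun c => rfl
  simp only [Qv, hdl, Prod.smul_mk, Prod.mk_add_mk, smul_zero, Pi.add_apply, Pi.smul_apply,
    smul_eq_mul, Pi.zero_apply, add_zero, zero_add]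
  rw [sum_sq_comb]
  norm_num

lemma Q_eps2 {k l : ℕ} (α β : ℝ) (a b : Fin k) :
    Qv (α • eps a + β • eps b : Vkl k l) = α^2 + β^2 + (if a = b then 2*α*β else 0) := by
  have heps : ∀ c : Fin k, (eps c : Vkl k l) = (0, sgl c, 0) := fun c => rfl
  simp only [Qv, heps, Prod.smul_mk, Prod.mk_add_mk, smul_zero, Pi.add_apply, Pi.smul_apply,
    smul_eq_mul, Pi.zero_apply, add_zero, zero_add]
  rw [sum_sq_comb]
  norm_num

lemma Q_dl1 {k l : ℕ} (α : ℝ) (a : Fin l) : Qv (α • dl a : Vkl k l) = α^2 := by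
  have h : (α • dl a : Vkl k l) = α • dl a + (0:ℝ) • dl a := by simp
  rw [h, Q_dl2]; simp

lemma Q_eps1 {k l : ℕ} (α : ℝ) (a : Fin k) : Qv (α • eps a : Vkl k l) = α^2 := by
  have h : (α • eps a : Vkl k l) = α • eps a + (0:ℝ) • eps a := by simp
  rw [h, Q_eps2]; simp

lemma decomp {k l : ℕ} {u w : Vkl k l} {m n : ℤ} (hu : u.1 = 0) (hw : w.1 = 0)
    (h : u + m • del = n • del + w) : m = n ∧ u = w := by
  have h1 := congrArg Prod.fst h
  simp only [del, Prod.smul_mk, Prod.fst_add, Prod.mk_add_mk, hu, hw, zero_add, add_zero,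
    Int.smul_one_eq_cast] at h1
  have hmn : m = n := by exact_mod_cast h1
  subst hmn
  refine ⟨rfl, ?_⟩
  have h2 : u + m • del = w + m • del := by rw [h, add_comm]
  exact add_right_cancel h2

lemma sgns_cases {σ : ℝ} (h : σ ∈ sgns) : σ = 1 ∨ σ = -1 := by
  rcases h with rfl | h
  · exact Or.inl rfl
  · exact Or.inr h

lemma sgns_sq {σ : ℝ} (h : σ ∈ sgns) : σ^2 = 1 := by
  rcases sgns_cases h with rfl | rfl <;> norm_num

lemma classify1 {k l : ℕ} {u : Vkl k l} (hu0 : u.1 = 0) {m : ℤ}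
    (hm : u + m • del ∈ R01x k l) :
    ((∀ m' : ℤ, u + m' • del ∈ R01x k l) ∧ Qv u = 2) ∨
    (∃ σ : ℝ, ∃ j : Fin l, σ ∈ sgns ∧ u = σ • ((2:ℝ) • dl j) ∧ Qv u = 4) := by
  rcases hm with ⟨m', σ, τ, j, s, hσ, hτ, hjs, heq⟩ | ⟨m', σ, j, hσ, heq⟩
  · left
    rw [add_assoc] at heq
    have hw : ((σ • dl j + τ • dl s : Vkl k l)).1 = 0 := by simp [dl]
    obtain ⟨-, hu⟩ := decomp hu0 hw heq
    refine ⟨fun m' => Or.inl ⟨m', σ, τ, j, s, hσ, hτ, hjs, by rw [hu]; abel⟩, ?_⟩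
    rw [hu, Q_dl2, if_neg hjs, sgns_sq hσ, sgns_sq hτ]
    norm_num
  · right
    have hw : ((σ • ((2:ℝ) • dl j) : Vkl k l)).1 = 0 := by simp [dl]
    obtain ⟨-, hu⟩ := decomp hu0 hw heq
    refine ⟨σ, j, hσ, hu, ?_⟩
    rw [hu, smul_smul, Q_dl1, mul_pow, sgns_sq hσ]
    norm_num

lemma classify2 {k l : ℕ} {u : Vkl k l} (hu0 : u.1 = 0) {m : ℤ}
    (hm : u + m • del ∈ R02x k l) :
    ((∀ m' : ℤ, u + m' • del ∈ R02x k l) ∧ (Qv u = 1 ∨ Qv u = 2)) ∨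
    (∃ σ : ℝ, ∃ i : Fin k, σ ∈ sgns ∧ u = σ • ((2:ℝ) • eps i) ∧ Qv u = 4) := by
  rcases hm with (⟨m', σ, i, hσ, heq⟩ | ⟨m', σ, τ, i, r, hσ, hτ, hir, heq⟩) | ⟨m', σ, i, hσ, heq⟩
  · left
    have hw : ((σ • eps i : Vkl k l)).1 = 0 := by simp [eps]
    obtain ⟨-, hu⟩ := decomp hu0 hw heq
    refine ⟨fun m' => Or.inl (Or.inl ⟨m', σ, i, hσ, by rw [hu]; abel⟩), Or.inl ?_⟩
    rw [hu, Q_eps1, sgns_sq hσ]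
  · left
    rw [add_assoc] at heq
    have hw : ((σ • eps i + τ • eps r : Vkl k l)).1 = 0 := by simp [eps]
    obtain ⟨-, hu⟩ := decomp hu0 hw heq
    refine ⟨fun m' => Or.inl (Or.inr ⟨m', σ, τ, i, r, hσ, hτ, hir, by rw [hu]; abel⟩), Or.inr ?_⟩
    rw [hu, Q_eps2, if_neg hir, sgns_sq hσ, sgns_sq hτ]
    norm_num
  · right
    have hw : ((σ • ((2:ℝ) • eps i) : Vkl k l)).1 = 0 := by simp [eps]
    obtain ⟨-, hu⟩ := decomp hu0 hw heq
    refine ⟨σ, i, hσ, hu, ?_⟩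
    rw [hu, smul_smul, Q_eps1, mul_pow, sgns_sq hσ]
    norm_num

lemma Qv_nonneg {k l : ℕ} (v : Vkl k l) : 0 ≤ Qv v := by
  unfold Qv; positivity

lemma nrm_eq {k l : ℕ} {u : Vkl k l} (hu0 : u.1 = 0) : nrm u = Real.sqrt (Qv u) := by
  rw [nrm, hu0, Qv]
  norm_num [add_assoc]

/-- Property (2.8) of the paper for type `A(2k,2ℓ-1)⁽²⁾`: for `i = 1, 2`, if `u`,
`v` and `u + v` lie in `Ṙ₀(i)^×` and `‖u‖ = ‖v‖ ≤ ‖u+v‖`, then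
`S_{u+v}(i) ⊆ S_u(i) + S_v(i)`. -/
theorem S_sum_A2 (k l : ℕ) (W : Set (Vkl k l)) (hW : W = R01x k l ∨ W = R02x k l)
    (u v : Vkl k l)
    (hu0 : u.1 = 0) (hv0 : v.1 = 0)
    (hu : u ≠ 0 ∧ ∃ m : ℤ, u + m • del ∈ W)
    (hv : v ≠ 0 ∧ ∃ m : ℤ, v + m • del ∈ W)
    (huv : u + v ≠ 0 ∧ ∃ m : ℤ, (u + v) + m • del ∈ W)
    (hlen : nrm u = nrm v) (hlen' : nrm v ≤ nrm (u + v)) :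
    ∀ m : ℤ, (u + v) + m • del ∈ W →
      ∃ m₁ m₂ : ℤ, m = m₁ + m₂ ∧ u + m₁ • del ∈ W ∧ v + m₂ • del ∈ W := by
  obtain ⟨-, mu, hmu⟩ := hu
  obtain ⟨-, mv, hmv⟩ := hv
  obtain ⟨-, mw, hmw⟩ := huv
  have huv0 : (u + v).1 = 0 := by simp [Prod.fst_add, hu0, hv0]
  have hQ : Qv u = Qv v := by
    rw [nrm_eq hu0, nrm_eq hv0] at hlen
    exact (Real.sqrt_inj (Qv_nonneg u) (Qv_nonneg v)).1 hlen
  rcases hW with rfl | rfl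
  · rcases classify1 hu0 hmu with ⟨hallu, hQu⟩ | ⟨σ, j, hσ, hue, hQu⟩ <;>
      rcases classify1 hv0 hmv with ⟨hallv, hQv⟩ | ⟨σ', j', hσ', hve, hQv⟩
    · exact fun m _ => ⟨m, 0, (add_zero m).symm, hallu m, hallv 0⟩
    · rw [hQu, hQv] at hQ; norm_num at hQ
    · rw [hQu, hQv] at hQ; norm_num at hQ
    · exfalso
      have hQw : Qv (u + v) = 2 ∨ Qv (u + v) = 4 := by
        rcases classify1 huv0 hmw with ⟨-, h⟩ | ⟨_, _, _, _, h⟩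
        · exact Or.inl h
        · exact Or.inr h
      have he : u + v = (σ * 2) • dl j + (σ' * 2) • dl j' := by
        rw [hue, hve, smul_smul, smul_smul]
      rw [he, Q_dl2] at hQw
      rcases sgns_cases hσ with rfl | rfl <;> rcases sgns_cases hσ' with rfl | rfl <;>
        split_ifs at hQw <;> norm_num at hQw
  · rcases classify2 hu0 hmu with ⟨hallu, hQu⟩ | ⟨σ, j, hσ, hue, hQu⟩ <;>
      rcases classify2 hv0 hmv with ⟨hallv, hQv⟩ | ⟨σ', j', hσ', hve, hQv⟩
    · exact fun m _ => ⟨m, 0, (add_zero m).symm, hallu m, hallv 0⟩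
    · rcases hQu with h | h <;> rw [h, hQv] at hQ <;> norm_num at hQ
    · rcases hQv with h | h <;> rw [hQu, h] at hQ <;> norm_num at hQ
    · exfalso
      have hQw : Qv (u + v) = 1 ∨ Qv (u + v) = 2 ∨ Qv (u + v) = 4 := by
        rcases classify2 huv0 hmw with ⟨-, h | h⟩ | ⟨_, _, _, _, h⟩
        · exact Or.inl h
        · exact Or.inr (Or.inl h)
        · exact Or.inr (Or.inr h)
      have he : u + v = (σ * 2) • eps j + (σ' * 2) • eps j' := by
        rw [hue, hve, smul_smul, smul_smul]
      rw [he, Q_eps2] at hQw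
      rcases sgns_cases hσ with rfl | rfl <;> rcases sgns_cases hσ' with rfl | rfl <;>
        split_ifs at hQw <;> norm_num at hQw
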